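/- arXiv:1207.3620 — 2 statements merged into one kernel-verified Lean document; each statement's English description precedes it below -/
import Mathlib

section
/- Let 1 ≤ p < ∞ and let T : X → Y be a bounded linear operator between Banach spaces such that the image T(Ball(X)) of the closed unit ball of X is a p-limited subset of Y. Then T is sequentially p-limited: for every weakly p-summable sequence ⟨x_n⟩ in X, the sequence ⟨T x_n⟩ is operator p-summable in Y. -/
open NormedSpace ENNReal

noncomputable section

/-- A sequence `x` in a normed space is weakly `p`-summable if
`∑ₙ |f (x n)|^p < ∞` for every continuous functional `f`. -/
def WeaklySummable (p : ℝ) {X : Type*} [NormedAddCommGroup X] [NormedSpace ℝ X]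
    (x : ℕ → X) : Prop :=
  ∀ f : StrongDual ℝ X, Summable fun n => |f (x n)| ^ p

/-- A set `S` is `p`-limited if for every sequence `f` of functionals with
`∑ₙ |fₙ z|^p < ∞` for all `z`, there is a nonnegative `p`-summable sequence `α`
dominating `|fₙ z|` uniformly for `z ∈ S`. -/
def PLimited (p : ℝ) {X : Type*} [NormedAddCommGroup X] [NormedSpace ℝ X]
    (S : Set X) : Prop :=
  ∀ f : ℕ → StrongDual ℝ X, (∀ z : X, Summable fun n => |f n z| ^ p) →
    ∃ α : ℕ → ℝ, (∀ n, 0 ≤ α n) ∧ (Summable fun n => α n ^ p) ∧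
      ∀ z ∈ S, ∀ n, |f n z| ≤ α n

/-- A sequence `x` in `X` is operator `p`-summable if `⟨T xₙ⟩` is norm `p`-summable
for every bounded operator `T : X → ℓ_p`. -/
def OperatorSummable (p : ℝ) [Fact (1 ≤ ENNReal.ofReal p)] {X : Type*}
    [NormedAddCommGroup X] [NormedSpace ℝ X] (x : ℕ → X) : Prop :=
  ∀ T : X →L[ℝ] lp (fun _ : ℕ => ℝ) (ENNReal.ofReal p),
    Summable fun n => ‖T (x n)‖ ^ p

/-!
Write `φₘ` for the `m`-th coordinate of an operator `S : Y → ℓ_p`. Since `∑ₘ |φₘ y|^p = ‖S y‖^p`,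
`p`-limitedness of `T(Ball X)` yields `α ∈ ℓ_p` with `‖φₘ ∘ T‖ ≤ αₘ`. By Banach–Steinhaus a weakly
`p`-summable sequence satisfies `∑ₙ |f (xₙ)|^p ≤ C ‖f‖^p`, so
`∑ₙ ‖S (T xₙ)‖^p = ∑ₘ ∑ₙ |(φₘ ∘ T) xₙ|^p ≤ C ∑ₘ αₘ^p`.
-/


section

variable {X Y : Type*} [NormedAddCommGroup X] [NormedSpace ℝ X]
  [NormedAddCommGroup Y] [NormedSpace ℝ Y] {p : ℝ}

lemma pos_of_one_le_ofReal (p : ℝ) [Fact (1 ≤ ENNReal.ofReal p)] : 0 < p :=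
  zero_lt_one.trans_le (ENNReal.one_le_ofReal.mp Fact.out)

lemma lp.hasSum_abs_rpow_ofReal [Fact (1 ≤ ENNReal.ofReal p)]
    (f : lp (fun _ : ℕ => ℝ) (ENNReal.ofReal p)) :
    HasSum (fun m => |f m| ^ p) (‖f‖ ^ p) := by
  have hp := pos_of_one_le_ofReal p
  have hpp : (ENNReal.ofReal p).toReal = p := ENNReal.toReal_ofReal hp.le
  have h := lp.hasSum_norm (by rw [hpp]; exact hp) f
  rw [hpp] at h
  simpa only [Real.norm_eq_abs] using h

lemma summable_tsum_swap_of_nonneg {α β : Type*} {a : α → β → ℝ} (ha : ∀ i j, 0 ≤ a i j)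
    (hrow : ∀ i, Summable (a i)) (htsum : Summable fun i => ∑' j, a i j) :
    Summable fun j => ∑' i, a i j := by
  have hprod : Summable fun ij : α × β => a ij.1 ij.2 :=
    (summable_prod_of_nonneg fun ij => ha ij.1 ij.2).mpr ⟨hrow, htsum⟩
  exact ((summable_prod_of_nonneg fun ji : β × α => ha ji.2 ji.1).mp
    ((Equiv.prodComm β α).summable_iff.mpr hprod)).2

/-- The Banach–Steinhaus theorem, applied to the truncations `f ↦ ∑_{n ∈ s} f (xₙ) eₙ` from
`X*` to `ℓ_p`, bounds the weak `ℓ_p` norm of a weakly `p`-summable sequence. -/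
theorem WeaklySummable.exists_tsum_rpow_le [Fact (1 ≤ ENNReal.ofReal p)] {x : ℕ → X}
    (hx : WeaklySummable p x) :
    ∃ C, 0 ≤ C ∧ ∀ f : StrongDual ℝ X, ∑' n, |f (x n)| ^ p ≤ C * ‖f‖ ^ p := by
  set q := ENNReal.ofReal p
  have hp := pos_of_one_le_ofReal p
  have hqp : q.toReal = p := ENNReal.toReal_ofReal hp.le
  let g : Finset ℕ → StrongDual ℝ X →L[ℝ] lp (fun _ : ℕ => ℝ) q := fun s =>
    ∑ n ∈ s, (ContinuousLinearMap.apply ℝ ℝ (x n)).smulRight (lp.single q n 1)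
  have hg : ∀ s f, ‖g s f‖ ^ p = ∑ n ∈ s, |f (x n)| ^ p := fun s f => by
    have hsingle : g s f = ∑ n ∈ s, lp.single q n (f (x n)) := by
      simp [g, ← lp.single_smul]
    have h := lp.norm_sum_single (E := fun _ : ℕ => ℝ) (by rw [hqp]; exact hp)
      (fun n => f (x n)) s
    rw [hqp] at h
    simpa only [hsingle, Real.norm_eq_abs] using h
  have hbdd : ∀ f : StrongDual ℝ X, ∃ C, ∀ s, ‖g s f‖ ≤ C := fun f =>
    ⟨(∑' n, |f (x n)| ^ p) ^ p⁻¹, fun s => by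
      rw [← Real.rpow_le_rpow_iff (norm_nonneg _) (by positivity) hp,
        Real.rpow_inv_rpow (tsum_nonneg fun _ => by positivity) hp.ne', hg]
      exact (hx f).sum_le_tsum s fun _ _ => by positivity⟩
  obtain ⟨C, hC⟩ := banach_steinhaus hbdd
  have hC0 : 0 ≤ C := (norm_nonneg _).trans (hC ∅)
  refine ⟨C ^ p, by positivity, fun f => (hx f).tsum_le_of_sum_le fun s => ?_⟩
  rw [← hg, ← Real.mul_rpow hC0 (norm_nonneg _)]
  exact Real.rpow_le_rpow (norm_nonneg _)
    (((g s).le_opNorm f).trans (mul_le_mul_of_nonneg_right (hC s) (norm_nonneg f))) hp.le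

theorem PLimited.exists_opNorm_comp_le {T : X →L[ℝ] Y}
    (hT : PLimited p (T '' Metric.closedBall 0 1)) (φ : ℕ → StrongDual ℝ Y)
    (hφ : ∀ y, Summable fun m => |φ m y| ^ p) :
    ∃ α : ℕ → ℝ, (Summable fun m => α m ^ p) ∧ ∀ m, ‖(φ m).comp T‖ ≤ α m := by
  obtain ⟨α, hα0, hα, hbound⟩ := hT φ hφ
  refine ⟨α, hα, fun m => ContinuousLinearMap.opNorm_le_of_unit_norm (hα0 m) ?_⟩
  intro u hu
  exact hbound (T u) ⟨u, by simp [hu], rfl⟩ m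

end

theorem stmt_16_general {X Y : Type*} [NormedAddCommGroup X] [NormedSpace ℝ X]
    [NormedAddCommGroup Y] [NormedSpace ℝ Y]
    (p : ℝ) [Fact (1 ≤ ENNReal.ofReal p)]
    (T : X →L[ℝ] Y) (hT : PLimited p (T '' Metric.closedBall 0 1)) :
    ∀ x : ℕ → X, WeaklySummable p x → OperatorSummable p (fun n => T (x n)) := by
  intro x hx S
  have hp := pos_of_one_le_ofReal p
  let φ : ℕ → StrongDual ℝ Y := fun m => (lp.evalCLM ℝ _ _ m).comp S
  obtain ⟨α, hα, hφT⟩ :=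
    hT.exists_opNorm_comp_le φ fun y => (lp.hasSum_abs_rpow_ofReal (S y)).summable
  obtain ⟨C, hC0, hC⟩ := hx.exists_tsum_rpow_le
  have hcoord : ∀ n, ‖S (T (x n))‖ ^ p = ∑' m, |(φ m).comp T (x n)| ^ p := fun n =>
    (lp.hasSum_abs_rpow_ofReal (S (T (x n)))).tsum_eq.symm
  simp_rw [hcoord]
  refine summable_tsum_swap_of_nonneg (fun _ _ => by positivity) (fun m => hx _) ?_
  refine (hα.mul_left C).of_nonneg_of_le (fun _ => tsum_nonneg fun _ => by positivity)
    fun m => (hC _).trans ?_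
  gcongr
  exact hφT m

/-- If `T : X → Y` maps the closed unit ball of `X` onto a `p`-limited set, then `T`
is sequentially `p`-limited: `⟨T xₙ⟩` is operator `p`-summable for every weakly
`p`-summable sequence `⟨xₙ⟩` in `X`. -/
theorem stmt_16 {X Y : Type*} [NormedAddCommGroup X] [NormedSpace ℝ X] [CompleteSpace X]
    [NormedAddCommGroup Y] [NormedSpace ℝ Y] [CompleteSpace Y]
    (p : ℝ) (hp : 1 ≤ p) [Fact (1 ≤ ENNReal.ofReal p)]
    (T : X →L[ℝ] Y) (hT : PLimited p (T '' Metric.closedBall 0 1)) :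
    ∀ x : ℕ → X, WeaklySummable p x → OperatorSummable p (fun n => T (x n)) :=
  stmt_16_general p T hT
end
end

section
/- Let 1 < p < ∞ with conjugate exponent p' and let X be a Banach space. Then the following are equivalent: (1) every operator p-summable sequence in X is norm p-summable; (2) for every Banach space Y, every bounded linear operator T : Y → X whose adjoint T* : X* → Y* is absolutely p-summing is itself absolutely p-summing; (3) every bounded linear operator T : ℓ_{p'} → X whose adjoint T* : X* → (ℓ_{p'})* is absolutely p-summing is itself absolutely p-summing. -/
open NormedSpace ENNReal

noncomputable section

/-- A bounded operator `T` is absolutely `p`-summing if it maps weakly `p`-summable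
sequences to norm `p`-summable sequences. -/
def AbsolutelySumming (p : ℝ) {X Y : Type*} [NormedAddCommGroup X] [NormedSpace ℝ X]
    [NormedAddCommGroup Y] [NormedSpace ℝ Y] (T : X →L[ℝ] Y) : Prop :=
  ∀ x : ℕ → X, WeaklySummable p x → Summable fun n => ‖T (x n)‖ ^ p

/-- The adjoint (dual map) of a bounded operator: `dualMap T g = g ∘ T`. -/
def dualMap {X Y : Type*} [NormedAddCommGroup X] [NormedSpace ℝ X]
    [NormedAddCommGroup Y] [NormedSpace ℝ Y] (T : X →L[ℝ] Y) :
    StrongDual ℝ Y →L[ℝ] StrongDual ℝ X :=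
  (ContinuousLinearMap.compL ℝ X Y ℝ).flip T

/-!
(1) ⇒ (2): given `S : X → ℓ_p`, the functionals `fₖ = S* eₖ*` are weakly `p`-summable
in `X*`, so `∑ₖ ‖T* fₖ‖^p < ∞`. For weakly `p`-summable `(yₙ)` the coefficient map
`g ↦ (g yₙ)ₙ` is bounded (closed graph theorem), so `∑ₖ ∑ₙ |fₖ (T yₙ)|^p < ∞`;
exchanging the sums gives `∑ₙ ‖S (T yₙ)‖^p`.

(3) ⇒ (1): an operator `p`-summable `(xₙ)` is weakly `p`-summable, so by Hölder the
synthesis operator `E a = ∑ aₙ xₙ` is bounded on `ℓ_{p'}`, with `‖E* f‖ ≤ ‖(f xₙ)ₙ‖_p`.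
The same exchange of sums shows that `E*` is absolutely `p`-summing, hence so is `E`, and
`xₙ = E eₙ` where the unit vectors `eₙ` of `ℓ_{p'}` are weakly `p`-summable by finite
`ℓ_p`–`ℓ_{p'}` duality.

(2) ⇒ (3) only transports `ℓ_{p'}` to the universe of (2).
-/

local notation "ℓ[" q "]" => lp (fun _ : ℕ => ℝ) (ENNReal.ofReal q)

lemma pos_of_fact_one_le_ofReal {p : ℝ} [Fact (1 ≤ ENNReal.ofReal p)] : 0 < p :=
  zero_lt_one.trans_le (ENNReal.one_le_ofReal.1 Fact.out)

namespace lp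

variable {p : ℝ}

lemma memℓp_of_summable_abs_rpow (hp : 0 < p) {a : ℕ → ℝ} (ha : Summable fun n => |a n| ^ p) :
    Memℓp a (ENNReal.ofReal p) :=
  memℓp_gen (by simpa [ENNReal.toReal_ofReal hp.le, Real.norm_eq_abs] using ha)

lemma norm_rpow_eq_tsum_abs_rpow (hp : 0 < p) (a : ℓ[p]) : ‖a‖ ^ p = ∑' n, |a n| ^ p := by
  simpa [ENNReal.toReal_ofReal hp.le, Real.norm_eq_abs] using
    lp.norm_rpow_eq_tsum (by rwa [ENNReal.toReal_ofReal hp.le]) a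

end lp

namespace WeaklySummable

variable {p : ℝ} {Z W : Type*} [NormedAddCommGroup Z] [NormedSpace ℝ Z]
  [NormedAddCommGroup W] [NormedSpace ℝ W] {z : ℕ → Z}

lemma map (hz : WeaklySummable p z) (T : Z →L[ℝ] W) : WeaklySummable p fun n => T (z n) :=
  fun f => hz (f.comp T)

variable [Fact (1 ≤ ENNReal.ofReal p)]

def coeffs (hz : WeaklySummable p z) : StrongDual ℝ Z →L[ℝ] ℓ[p] :=
  let g : StrongDual ℝ Z →ₗ[ℝ] ℓ[p] :=
    { toFun f := ⟨fun n => f (z n),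
        lp.memℓp_of_summable_abs_rpow pos_of_fact_one_le_ofReal (hz f)⟩
      map_add' _ _ := rfl
      map_smul' _ _ := rfl }
  ⟨g, g.continuous_of_seq_closed_graph fun _ f a hu ha => lp.ext <| funext fun n =>
    tendsto_nhds_unique (((lp.evalCLM ℝ _ _ n).continuous.tendsto a).comp ha)
      (((ContinuousLinearMap.apply ℝ ℝ (z n)).continuous.tendsto f).comp hu)⟩

@[simp] lemma coeffs_apply (hz : WeaklySummable p z) (f : StrongDual ℝ Z) (n : ℕ) :
    hz.coeffs f n = f (z n) := rfl

lemma tsum_abs_rpow_eq (hz : WeaklySummable p z) (f : StrongDual ℝ Z) :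
    ∑' n, |f (z n)| ^ p = ‖hz.coeffs f‖ ^ p :=
  (lp.norm_rpow_eq_tsum_abs_rpow pos_of_fact_one_le_ofReal (hz.coeffs f)).symm

lemma tsum_abs_rpow_le (hz : WeaklySummable p z) (f : StrongDual ℝ Z) :
    ∑' n, |f (z n)| ^ p ≤ ‖hz.coeffs‖ ^ p * ‖f‖ ^ p := by
  rw [hz.tsum_abs_rpow_eq, ← Real.mul_rpow (norm_nonneg hz.coeffs) (norm_nonneg f)]
  exact Real.rpow_le_rpow (norm_nonneg _) (hz.coeffs.le_opNorm f) pos_of_fact_one_le_ofReal.le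

end WeaklySummable

section Pairing

variable {p p' : ℝ}

lemma Real.HolderConjugate.toReal_ofReal (hc : p.HolderConjugate p') :
    (ENNReal.ofReal p).toReal.HolderConjugate (ENNReal.ofReal p').toReal := by
  rwa [ENNReal.toReal_ofReal hc.nonneg, ENNReal.toReal_ofReal hc.symm.nonneg]

lemma summable_norm_mul_of_holderConjugate (hc : p.HolderConjugate p') (a : ℓ[p']) (b : ℓ[p]) :
    Summable fun n => ‖a n * b n‖ := by
  simpa only [norm_mul] using lp.summable_mul hc.toReal_ofReal.symm a b

lemma abs_tsum_mul_le_of_holderConjugate (hc : p.HolderConjugate p') (a : ℓ[p']) (b : ℓ[p]) :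
    |∑' n, a n * b n| ≤ ‖a‖ * ‖b‖ := by
  calc |∑' n, a n * b n| ≤ ∑' n, ‖a n * b n‖ :=
        norm_tsum_le_tsum_norm (summable_norm_mul_of_holderConjugate hc a b)
    _ = ∑' n, ‖a n‖ * ‖b n‖ := by simp only [norm_mul]
    _ ≤ ‖a‖ * ‖b‖ := lp.tsum_mul_le_mul_norm' hc.toReal_ofReal.symm a b

variable [Fact (1 ≤ ENNReal.ofReal p)] [Fact (1 ≤ ENNReal.ofReal p')]

def lpPairing (hc : p.HolderConjugate p') : ℓ[p'] →L[ℝ] StrongDual ℝ ℓ[p] :=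
  have hs := fun a b => (summable_norm_mul_of_holderConjugate hc a b).of_norm
  LinearMap.mkContinuous₂
    (LinearMap.mk₂ ℝ (fun a b => ∑' n, a n * b n)
      (fun a₁ a₂ b => by
        simp only [lp.coeFn_add, Pi.add_apply, add_mul]
        exact (hs a₁ b).tsum_add (hs a₂ b))
      (fun c a b => by
        simp only [lp.coeFn_smul, Pi.smul_apply, smul_eq_mul, mul_assoc]
        exact tsum_mul_left)
      (fun a b₁ b₂ => by
        simp only [lp.coeFn_add, Pi.add_apply, mul_add]
        exact (hs a b₁).tsum_add (hs a b₂))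
      (fun c a b => by
        simp only [lp.coeFn_smul, Pi.smul_apply, smul_eq_mul, mul_left_comm]
        exact tsum_mul_left))
    1 fun a b => by simpa [Real.norm_eq_abs] using abs_tsum_mul_le_of_holderConjugate hc a b

lemma lpPairing_apply (hc : p.HolderConjugate p') (a : ℓ[p']) (b : ℓ[p]) :
    lpPairing hc a b = ∑' n, a n * b n := rfl

lemma lpPairing_single (hc : p.HolderConjugate p') (k : ℕ) (c : ℝ) :
    lpPairing hc (lp.single _ k c) = c • lp.evalCLM ℝ (fun _ : ℕ => ℝ) (ENNReal.ofReal p) k := by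
  ext b
  rw [lpPairing_apply, tsum_eq_single k fun n hn => by simp [hn]]
  simp [lp.evalCLM]

end Pairing

section Duality

variable {p p' : ℝ}

/-- Finite `ℓ_p`–`ℓ_{p'}` duality: test against `c = b |b|^{p-2}`, for which
`c b = |b|^p = |c|^{p'}`. -/
lemma Real.HolderConjugate.sum_abs_rpow_le_of_forall_sum_mul_le (hc : p.HolderConjugate p')
    {F : Finset ℕ} {b : ℕ → ℝ} {M : ℝ} (hM : 0 ≤ M)
    (h : ∀ c : ℕ → ℝ, ∑ k ∈ F, c k * b k ≤ M * (∑ k ∈ F, |c k| ^ p') ^ p'⁻¹) :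
    ∑ k ∈ F, |b k| ^ p ≤ M ^ p := by
  have hcb : ∀ k, b k * |b k| ^ (p - 2) * b k = |b k| ^ p := fun k => by
    rw [mul_right_comm, ← sq, ← sq_abs, ← Real.rpow_two,
      ← Real.rpow_add' (abs_nonneg _) (by linarith [hc.pos])]
    ring_nf
  have hcabs : ∀ k, |b k * |b k| ^ (p - 2)| ^ p' = |b k| ^ p := fun k => by
    rw [abs_mul, abs_of_nonneg (Real.rpow_nonneg (abs_nonneg _) _),
      ← Real.rpow_one_add' (abs_nonneg _) (by linarith [hc.lt]), show 1 + (p - 2) = p - 1 by ring,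
      ← Real.rpow_mul (abs_nonneg _), hc.sub_one_mul_conj]
  set S := ∑ k ∈ F, |b k| ^ p
  have hS : S ≤ M * S ^ p'⁻¹ := by
    simpa only [hcb, hcabs] using h fun k => b k * |b k| ^ (p - 2)
  rcases (Finset.sum_nonneg fun k _ => by positivity : 0 ≤ S).eq_or_lt with hS0 | hS0
  · rw [show S = 0 from hS0.symm]; positivity
  have hsplit : S ^ p⁻¹ * S ^ p'⁻¹ = S := by
    rw [← Real.rpow_add hS0, hc.inv_add_inv_eq_one, Real.rpow_one]
  have hroot : S ^ p⁻¹ ≤ M :=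
    le_of_mul_le_mul_right (hsplit.trans_le hS) (Real.rpow_pos_of_pos hS0 _)
  calc S = (S ^ p⁻¹) ^ p := (Real.rpow_inv_rpow hS0.le hc.ne_zero).symm
    _ ≤ M ^ p := Real.rpow_le_rpow (by positivity) hroot hc.nonneg

theorem weaklySummable_lp_single (hc : p.HolderConjugate p') [Fact (1 ≤ ENNReal.ofReal p')] :
    WeaklySummable p fun n => (lp.single (ENNReal.ofReal p') n 1 : ℓ[p']) := by
  intro g
  refine summable_of_sum_le (fun _ => by positivity) fun F =>
    hc.sum_abs_rpow_le_of_forall_sum_mul_le (norm_nonneg g) fun c => ?_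
  have hnorm : ‖∑ k ∈ F, (lp.single (ENNReal.ofReal p') k (c k) : ℓ[p'])‖ =
      (∑ k ∈ F, |c k| ^ p') ^ p'⁻¹ := by
    have := lp.norm_sum_single (E := fun _ : ℕ => ℝ)
      (by rw [ENNReal.toReal_ofReal hc.symm.nonneg]; exact hc.symm.pos) c F
    rw [ENNReal.toReal_ofReal hc.symm.nonneg] at this
    simp only [Real.norm_eq_abs] at this
    rw [← this, Real.rpow_rpow_inv (norm_nonneg _) hc.symm.ne_zero]
  calc ∑ k ∈ F, c k * g (lp.single _ k 1)
      = g (∑ k ∈ F, (lp.single (ENNReal.ofReal p') k (c k) : ℓ[p'])) := by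
        rw [map_sum]
        refine Finset.sum_congr rfl fun k _ => ?_
        rw [← smul_eq_mul, ← map_smul, ← lp.single_smul, smul_eq_mul, mul_one]
    _ ≤ ‖g‖ * ‖∑ k ∈ F, (lp.single (ENNReal.ofReal p') k (c k) : ℓ[p'])‖ :=
        (le_abs_self _).trans (g.le_opNorm _)
    _ = ‖g‖ * (∑ k ∈ F, |c k| ^ p') ^ p'⁻¹ := by rw [hnorm]

end Duality

lemma dualMap_apply {Y Z : Type*} [NormedAddCommGroup Y] [NormedSpace ℝ Y]
    [NormedAddCommGroup Z] [NormedSpace ℝ Z] (T : Y →L[ℝ] Z) (g : StrongDual ℝ Z) (y : Y) :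
    dualMap T g y = g (T y) := rfl

namespace WeaklySummable

variable {p p' : ℝ} [Fact (1 ≤ ENNReal.ofReal p)] [Fact (1 ≤ ENNReal.ofReal p')]
  {X : Type*} [NormedAddCommGroup X] [NormedSpace ℝ X] {x : ℕ → X}

lemma norm_le_of_forall_apply_eq_lpPairing (hc : p.HolderConjugate p') (hx : WeaklySummable p x)
    {v : X} (a : ℓ[p']) (h : ∀ f : StrongDual ℝ X, f v = lpPairing hc a (hx.coeffs f)) :
    ‖v‖ ≤ ‖hx.coeffs‖ * ‖a‖ := by
  refine NormedSpace.norm_le_dual_bound ℝ v (by positivity) fun f => ?_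
  calc ‖f v‖ = |∑' n, a n * hx.coeffs f n| := by rw [h, lpPairing_apply, Real.norm_eq_abs]
    _ ≤ ‖a‖ * ‖hx.coeffs f‖ := abs_tsum_mul_le_of_holderConjugate hc a _
    _ ≤ ‖a‖ * (‖hx.coeffs‖ * ‖f‖) := by gcongr; exact hx.coeffs.le_opNorm f
    _ = ‖hx.coeffs‖ * ‖a‖ * ‖f‖ := by ring

lemma norm_sum_smul_le (hc : p.HolderConjugate p') (hx : WeaklySummable p x) (t : Finset ℕ)
    (a : ℕ → ℝ) :
    ‖∑ n ∈ t, a n • x n‖ ≤ ‖hx.coeffs‖ * ‖∑ n ∈ t, (lp.single _ n (a n) : ℓ[p'])‖ :=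
  hx.norm_le_of_forall_apply_eq_lpPairing hc _ fun f => by
    simp [map_sum, lpPairing_single, lp.evalCLM]

variable [CompleteSpace X]

lemma summable_smul (hc : p.HolderConjugate p') (hx : WeaklySummable p x)
    (a : ℓ[p']) : Summable fun n => a n • x n := by
  rw [summable_iff_vanishing_norm]
  intro ε hε
  obtain ⟨s, hs⟩ :=
    summable_iff_vanishing_norm.1 (lp.hasSum_single ENNReal.ofReal_ne_top a).summable
    (ε / (‖hx.coeffs‖ + 1)) (by positivity)
  refine ⟨s, fun t ht => (hx.norm_sum_smul_le hc t a).trans_lt ?_⟩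
  calc ‖hx.coeffs‖ * ‖∑ n ∈ t, (lp.single _ n (a n) : ℓ[p'])‖
      ≤ ‖hx.coeffs‖ * (ε / (‖hx.coeffs‖ + 1)) := by gcongr; exact (hs t ht).le
    _ < (‖hx.coeffs‖ + 1) * (ε / (‖hx.coeffs‖ + 1)) := by gcongr; linarith
    _ = ε := by field_simp

lemma apply_tsum_smul (hc : p.HolderConjugate p') (hx : WeaklySummable p x)
    (a : ℓ[p']) (f : StrongDual ℝ X) :
    f (∑' n, a n • x n) = lpPairing hc a (hx.coeffs f) := by
  simp [f.map_tsum (hx.summable_smul hc a), lpPairing_apply]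

def synthesis (hc : p.HolderConjugate p') (hx : WeaklySummable p x) : ℓ[p'] →L[ℝ] X :=
  LinearMap.mkContinuous
    { toFun a := ∑' n, a n • x n
      map_add' a b := by
        simp only [lp.coeFn_add, Pi.add_apply, add_smul]
        exact (hx.summable_smul hc a).tsum_add (hx.summable_smul hc b)
      map_smul' c a := by
        simp only [lp.coeFn_smul, Pi.smul_apply, smul_eq_mul, mul_smul, RingHom.id_apply]
        exact (hx.summable_smul hc a).tsum_const_smul c }
    ‖hx.coeffs‖ fun a => hx.norm_le_of_forall_apply_eq_lpPairing hc a (hx.apply_tsum_smul hc a)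

lemma synthesis_apply (hc : p.HolderConjugate p') (hx : WeaklySummable p x) (a : ℓ[p']) :
    hx.synthesis hc a = ∑' n, a n • x n := rfl

lemma synthesis_single (hc : p.HolderConjugate p') (hx : WeaklySummable p x) (n : ℕ) :
    hx.synthesis hc (lp.single (ENNReal.ofReal p') n 1) = x n := by
  rw [synthesis_apply, tsum_eq_single n fun m hm => by simp [hm]]
  simp

lemma norm_dualMap_synthesis_le (hc : p.HolderConjugate p') (hx : WeaklySummable p x)
    (f : StrongDual ℝ X) : ‖dualMap (hx.synthesis hc) f‖ ≤ ‖hx.coeffs f‖ :=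
  ContinuousLinearMap.opNorm_le_bound _ (norm_nonneg _) fun a => by
    rw [dualMap_apply, synthesis_apply, hx.apply_tsum_smul hc, lpPairing_apply, Real.norm_eq_abs,
      mul_comm]
    exact abs_tsum_mul_le_of_holderConjugate hc a _

end WeaklySummable

lemma summable_tsum_comm_of_nonneg {h : ℕ → ℕ → ℝ} (h0 : ∀ k n, 0 ≤ h k n)
    (hrow : ∀ k, Summable (h k)) (hsum : Summable fun k => ∑' n, h k n) :
    Summable fun n => ∑' k, h k n := by
  have hG : Summable (Function.uncurry h) :=
    (summable_prod_of_nonneg fun _ => h0 _ _).2 ⟨hrow, hsum⟩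
  exact ((summable_prod_of_nonneg fun _ => h0 _ _).1 ((Equiv.prodComm ℕ ℕ).summable_iff.2 hG)).2

section Operators

variable {p : ℝ} {V W Y Z : Type*} [NormedAddCommGroup V] [NormedSpace ℝ V]
  [NormedAddCommGroup W] [NormedSpace ℝ W] [NormedAddCommGroup Y] [NormedSpace ℝ Y]
  [NormedAddCommGroup Z] [NormedSpace ℝ Z]

lemma dualMap_comp (T : Y →L[ℝ] Z) (A : W →L[ℝ] Y) :
    dualMap (T.comp A) = (dualMap A).comp (dualMap T) := rfl

lemma AbsolutelySumming.comp_right {T : Y →L[ℝ] Z} (hT : AbsolutelySumming p T)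
    (A : W →L[ℝ] Y) : AbsolutelySumming p (T.comp A) :=
  fun _ hy => hT _ (hy.map A)

lemma AbsolutelySumming.comp_left (hp : 0 ≤ p) {T : Y →L[ℝ] Z} (hT : AbsolutelySumming p T)
    (B : Z →L[ℝ] V) : AbsolutelySumming p (B.comp T) := fun y hy =>
  ((hT y hy).mul_left (‖B‖ ^ p)).of_nonneg_of_le (fun _ => by positivity) fun n => by
    rw [← Real.mul_rpow (norm_nonneg _) (norm_nonneg _)]
    exact Real.rpow_le_rpow (norm_nonneg _) (B.le_opNorm _) hp

lemma AbsolutelySumming.of_dualMap_of_continuousLinearEquiv (hp : 0 ≤ p) (e : W ≃L[ℝ] Y)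
    {T : Y →L[ℝ] Z} (hT : AbsolutelySumming p (dualMap T))
    (H : AbsolutelySumming p (dualMap (T.comp (e : W →L[ℝ] Y))) →
      AbsolutelySumming p (T.comp (e : W →L[ℝ] Y))) :
    AbsolutelySumming p T := by
  have hTe := H (by rw [dualMap_comp]; exact hT.comp_left hp _)
  simpa [ContinuousLinearMap.comp_assoc] using hTe.comp_right (e.symm : Y →L[ℝ] W)

lemma WeaklySummable.summable_tsum_abs_rpow [Fact (1 ≤ ENNReal.ofReal p)] {y : ℕ → Y}
    (hy : WeaklySummable p y) {g : ℕ → StrongDual ℝ Y} (hg : Summable fun k => ‖g k‖ ^ p) :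
    Summable fun n => ∑' k, |g k (y n)| ^ p :=
  summable_tsum_comm_of_nonneg (fun _ _ => by positivity) (fun k => hy (g k))
    ((hg.mul_left _).of_nonneg_of_le (fun _ => tsum_nonneg fun _ => by positivity)
      fun k => hy.tsum_abs_rpow_le (g k))

lemma OperatorSummable.weaklySummable [Fact (1 ≤ ENNReal.ofReal p)] {x : ℕ → Y}
    (hx : OperatorSummable p x) : WeaklySummable p x := fun f => by
  simpa [Real.norm_eq_abs, lp.norm_single (ENNReal.ofReal_pos.2 pos_of_fact_one_le_ofReal)] using
    hx ((lp.singleContinuousLinearMap ℝ (fun _ : ℕ => ℝ) (ENNReal.ofReal p) 0).comp f)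

end Operators

section Equivalence

variable {p p' : ℝ} {X : Type*} [NormedAddCommGroup X] [NormedSpace ℝ X]

theorem weaklySummable_evalCLM (hc : p.HolderConjugate p') [Fact (1 ≤ ENNReal.ofReal p)] :
    WeaklySummable p fun k => lp.evalCLM ℝ (fun _ : ℕ => ℝ) (ENNReal.ofReal p) k := by
  have : Fact (1 ≤ ENNReal.ofReal p') := ⟨ENNReal.one_le_ofReal.2 hc.symm.lt.le⟩
  simpa [lpPairing_single] using (weaklySummable_lp_single hc).map (lpPairing hc)

theorem absolutelySumming_of_absolutelySumming_dualMap (hc : p.HolderConjugate p')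
    [Fact (1 ≤ ENNReal.ofReal p)]
    (H : ∀ x : ℕ → X, OperatorSummable p x → Summable fun n => ‖x n‖ ^ p)
    {Y : Type*} [NormedAddCommGroup Y] [NormedSpace ℝ Y] (T : Y →L[ℝ] X)
    (hT : AbsolutelySumming p (dualMap T)) : AbsolutelySumming p T := by
  intro y hy
  refine H _ fun S => ?_
  have hg := hT _ ((weaklySummable_evalCLM hc).map (dualMap S))
  convert hy.summable_tsum_abs_rpow hg using 2 with n
  exact lp.norm_rpow_eq_tsum_abs_rpow hc.pos _

/-- `‖E* fₖ‖^p ≤ ∑ₙ |fₖ xₙ|^p`, and summing over `k` gives, after exchanging the order of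
summation, `∑ₙ ‖S xₙ‖^p` for the operator `S z = (fₖ z)ₖ` into `ℓ_p`. -/
theorem OperatorSummable.absolutelySumming_dualMap_synthesis (hc : p.HolderConjugate p')
    [Fact (1 ≤ ENNReal.ofReal p)] [Fact (1 ≤ ENNReal.ofReal p')] [CompleteSpace X]
    {x : ℕ → X} (hx : OperatorSummable p x) :
    AbsolutelySumming p (dualMap (hx.weaklySummable.synthesis hc)) := by
  intro f hf
  have hS : Summable fun n => ∑' k, |f k (x n)| ^ p := by
    convert hx (hf.coeffs.comp (NormedSpace.inclusionInDoubleDual ℝ X)) using 2 with n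
    exact (lp.norm_rpow_eq_tsum_abs_rpow hc.pos
      (hf.coeffs (NormedSpace.inclusionInDoubleDual ℝ X (x n)))).symm
  refine (summable_tsum_comm_of_nonneg (fun _ _ => by positivity)
    (fun n => (hf (NormedSpace.inclusionInDoubleDual ℝ X (x n)) :
      Summable fun k => |f k (x n)| ^ p)) hS).of_nonneg_of_le
    (fun _ => by positivity) fun k => ?_
  change _ ≤ ∑' n, |f k (x n)| ^ p
  rw [hx.weaklySummable.tsum_abs_rpow_eq]
  exact Real.rpow_le_rpow (norm_nonneg _) (hx.weaklySummable.norm_dualMap_synthesis_le hc _)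
    hc.nonneg

theorem summable_norm_rpow_of_operatorSummable (hc : p.HolderConjugate p')
    [Fact (1 ≤ ENNReal.ofReal p)] [Fact (1 ≤ ENNReal.ofReal p')] [CompleteSpace X]
    (H : ∀ T : ℓ[p'] →L[ℝ] X, AbsolutelySumming p (dualMap T) → AbsolutelySumming p T)
    {x : ℕ → X} (hx : OperatorSummable p x) : Summable fun n => ‖x n‖ ^ p := by
  simpa [hx.weaklySummable.synthesis_single hc] using
    H _ (hx.absolutelySumming_dualMap_synthesis hc) _ (weaklySummable_lp_single hc)

end Equivalence

universe u v

/-- The following are equivalent for a Banach space `X`: (1) every operator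
`p`-summable sequence in `X` is norm `p`-summable; (2) every operator `T : Y → X`
(for any Banach space `Y`) with absolutely `p`-summing adjoint is absolutely
`p`-summing; (3) every operator `T : ℓ_{p'} → X` with absolutely `p`-summing adjoint
is absolutely `p`-summing. -/
theorem stmt_19 {X : Type u} [NormedAddCommGroup X] [NormedSpace ℝ X] [CompleteSpace X]
    (p p' : ℝ) (hp : 1 < p) (hpq : 1 / p + 1 / p' = 1)
    [Fact (1 ≤ ENNReal.ofReal p)] [Fact (1 ≤ ENNReal.ofReal p')] :
    ((∀ x : ℕ → X, OperatorSummable p x → Summable fun n => ‖x n‖ ^ p) ↔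
      (∀ (Y : Type v) [NormedAddCommGroup Y] [NormedSpace ℝ Y] [CompleteSpace Y],
        ∀ T : Y →L[ℝ] X, AbsolutelySumming p (dualMap T) → AbsolutelySumming p T)) ∧
    ((∀ x : ℕ → X, OperatorSummable p x → Summable fun n => ‖x n‖ ^ p) ↔
      (∀ T : lp (fun _ : ℕ => ℝ) (ENNReal.ofReal p') →L[ℝ] X,
        AbsolutelySumming p (dualMap T) → AbsolutelySumming p T)) := by
  have hc : p.HolderConjugate p' :=
    Real.holderConjugate_iff.2 ⟨hp, by simpa only [one_div] using hpq⟩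
  refine ⟨⟨fun H Y _ _ _ => absolutelySumming_of_absolutelySumming_dualMap hc H, fun H _ => ?_⟩,
    ⟨fun H => absolutelySumming_of_absolutelySumming_dualMap hc H,
      fun H _ => summable_norm_rpow_of_operatorSummable hc H⟩⟩
  refine summable_norm_rpow_of_operatorSummable hc fun T hT => ?_
  exact hT.of_dualMap_of_continuousLinearEquiv hc.nonneg
    (ContinuousLinearEquiv.ulift : ULift.{v} ℓ[p'] ≃L[ℝ] ℓ[p']) (H _ _)
end
end
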